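/- arXiv:math/0107121 — 7 statements merged into one kernel-verified Lean document; each statement's English description precedes it below -/
import Mathlib

section
/- Let X be a Polish metric space and f : X × X → X a continuous function. Then the set of closed subsets F ⊆ X satisfying 'for all x, y ∈ F, f(x,y) ∈ F' is closed in the space F(X) of closed subsets of X equipped with the Wijsman topology. -/
open Filter

open scoped Classical in
/-- Wijsman distance with the convention `dist(x, ∅) = 1`, using a metric
truncated at `1`. -/
noncomputable def wdist {X : Type*} [MetricSpace X] (x : X) (F : Set X) : ℝ :=
  if F = ∅ then 1 else min 1 (Metric.infDist x F)

lemma wdist_nonneg' {X : Type*} [MetricSpace X] (x : X) (F : Set X) : 0 ≤ wdist x F := by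
  unfold wdist
  split
  · norm_num
  · exact le_min zero_le_one Metric.infDist_nonneg

lemma wdist_eq_zero_iff' {X : Type*} [MetricSpace X] (x : X) {F : Set X} (hF : IsClosed F) :
    wdist x F = 0 ↔ x ∈ F := by
  unfold wdist
  split_ifs with h
  · subst h
    simp
  · have hne : F.Nonempty := Set.nonempty_iff_ne_empty.mpr h
    constructor
    · intro h0
      have hd : Metric.infDist x F = 0 := by
        rcases min_cases 1 (Metric.infDist x F) with ⟨he, _⟩ | ⟨he, _⟩
        · rw [he] at h0; norm_num at h0
        · rw [he] at h0; exact h0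
      exact (hF.mem_iff_infDist_zero hne).mpr hd
    · intro hx
      have : Metric.infDist x F = 0 := Metric.infDist_zero_of_mem hx
      simp [this]

lemma wdist_le_dist' {X : Type*} [MetricSpace X] (x w : X) {F : Set X} (hw : w ∈ F) :
    wdist x F ≤ dist x w := by
  unfold wdist
  split_ifs with h
  · exact absurd (h ▸ hw) (Set.notMem_empty w)
  · exact le_trans (min_le_right _ _) (Metric.infDist_le_dist_of_mem hw)

/-- Let `X` be a Polish metric space and `f : X × X → X` continuous. The set of
closed subsets `F ⊆ X` satisfying `∀ x y ∈ F, f(x,y) ∈ F` is closed in the space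
of closed subsets of `X` with the Wijsman topology (stated sequentially, which
is equivalent since the Wijsman topology is metrizable). -/
theorem closed_under_operation_isClosed_wijsman {X : Type*} [MetricSpace X]
    [CompleteSpace X] [TopologicalSpace.SeparableSpace X]
    (f : X × X → X) (hf : Continuous f)
    (F : ℕ → Set X) (hFclosed : ∀ n, IsClosed (F n))
    (hFstable : ∀ n, ∀ x ∈ F n, ∀ y ∈ F n, f (x, y) ∈ F n)
    (F₀ : Set X) (hF₀ : IsClosed F₀)
    (hconv : ∀ x : X, Tendsto (fun n => wdist x (F n)) atTop (nhds (wdist x F₀))) :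
    ∀ x ∈ F₀, ∀ y ∈ F₀, f (x, y) ∈ F₀ := by
  classical
  -- key approximation lemma
  have key : ∀ z ∈ F₀, ∃ u : ℕ → X, (∀ᶠ n in atTop, u n ∈ F n) ∧
      Tendsto u atTop (nhds z) := by
    intro z hz
    have hz0 : wdist z F₀ = 0 := (wdist_eq_zero_iff' z hF₀).mpr hz
    have hconvz : Tendsto (fun n => wdist z (F n)) atTop (nhds 0) := hz0 ▸ hconv z
    have hev : ∀ᶠ n in atTop, wdist z (F n) < 1 :=
      hconvz.eventually (eventually_lt_nhds zero_lt_one)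
    set P : ℕ → X → Prop := fun n w => w ∈ F n ∧ dist z w < wdist z (F n) + 1 / (n + 1)
    have hex : ∀ᶠ n in atTop, ∃ w, P n w := by
      filter_upwards [hev] with n hn
      have hne : (F n).Nonempty := by
        rcases eq_or_ne (F n) ∅ with h | h
        · exfalso
          simp [wdist, h] at hn
        · exact Set.nonempty_iff_ne_empty.mpr h
      have hw : Metric.infDist z (F n) = wdist z (F n) := by
        have : wdist z (F n) = min 1 (Metric.infDist z (F n)) := by
          simp [wdist, Set.nonempty_iff_ne_empty.mp hne]
        rw [this] at hn ⊢
        rcases min_cases 1 (Metric.infDist z (F n)) with ⟨he, _⟩ | ⟨he, _⟩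
        · rw [he] at hn; norm_num at hn
        · rw [he]
      have hlt : Metric.infDist z (F n) < wdist z (F n) + 1 / (n + 1) := by
        rw [hw]
        have : (0:ℝ) < 1 / (n + 1) := by positivity
        linarith
      obtain ⟨w, hwF, hwd⟩ := (Metric.infDist_lt_iff hne).mp hlt
      exact ⟨w, hwF, hwd⟩
    set u : ℕ → X := fun n => if h : ∃ w, P n w then h.choose else z with hu
    have huP : ∀ᶠ n in atTop, P n (u n) := by
      filter_upwards [hex] with n hn
      simp only [hu, dif_pos hn]
      exact hn.choose_spec
    refine ⟨u, ?_, ?_⟩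
    · filter_upwards [huP] with n hn using hn.1
    · rw [tendsto_iff_dist_tendsto_zero]
      apply squeeze_zero' (by filter_upwards with n using dist_nonneg)
        (g := fun n => wdist z (F n) + 1 / (n + 1))
      · filter_upwards [huP] with n hn
        rw [dist_comm]
        exact hn.2.le
      · have h1 : Tendsto (fun n : ℕ => 1 / ((n:ℝ) + 1)) atTop (nhds 0) :=
          tendsto_one_div_add_atTop_nhds_zero_nat
        simpa using hconvz.add h1
  intro x hx y hy
  obtain ⟨u, huF, hux⟩ := key x hx
  obtain ⟨v, hvF, hvy⟩ := key y hy
  have htend : Tendsto (fun n => f (u n, v n)) atTop (nhds (f (x, y))) :=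
    (hf.tendsto _).comp (hux.prodMk_nhds hvy)
  have hdist : Tendsto (fun n => dist (f (x, y)) (f (u n, v n))) atTop (nhds 0) := by
    have := tendsto_iff_dist_tendsto_zero.mp htend
    simpa [dist_comm] using this
  have hle : wdist (f (x, y)) F₀ ≤ 0 := by
    refine le_of_tendsto_of_tendsto (hconv _) hdist ?_
    filter_upwards [huF, hvF] with n hun hvn
    exact wdist_le_dist' _ _ (hFstable n _ hun _ hvn)
  have h0 : wdist (f (x, y)) F₀ = 0 := le_antisymm hle (wdist_nonneg' _ _)
  exact (wdist_eq_zero_iff' _ hF₀).mp h0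
end

section
/- Let H be a separable Hilbert space, L, L_1, L_2, ... closed linear subspaces of H, and P, P_1, P_2, ... the orthogonal projections onto L, L_1, L_2, ... respectively. Then ‖P_n x − x‖ → ‖P x − x‖ for all x ∈ H if and only if P_n x → P x in norm for all x ∈ H. -/
open Filter

section Aux

variable {H : Type*} [NormedAddCommGroup H] [InnerProductSpace ℝ H]

local notation "⟪" x ", " y "⟫" => @inner ℝ H _ x y

/-- A projection fixes elements of its range. -/
lemma proj_fix {K : Submodule ℝ H} {Q : H → H}
    (hQ : ∀ x, Q x ∈ K ∧ x - Q x ∈ Kᗮ) {y : H} (hy : y ∈ K) : Q y = y := by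
  have h1 : y - Q y ∈ K := K.sub_mem hy (hQ y).1
  have h2 : ⟪y - Q y, y - Q y⟫ = 0 :=
    Submodule.inner_right_of_mem_orthogonal h1 (hQ y).2
  have := inner_self_eq_zero.mp h2
  have : y - Q y = 0 := this
  linear_combination (norm := module) -this

/-- A projection is self-adjoint. -/
lemma proj_selfadj {K : Submodule ℝ H} {Q : H → H}
    (hQ : ∀ x, Q x ∈ K ∧ x - Q x ∈ Kᗮ) (u v : H) : ⟪Q u, v⟫ = ⟪u, Q v⟫ := by
  have h1 : ⟪Q u, v - Q v⟫ = 0 :=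
    Submodule.inner_right_of_mem_orthogonal (hQ u).1 (hQ v).2
  have h2 : ⟪u - Q u, Q v⟫ = 0 :=
    Submodule.inner_left_of_mem_orthogonal (hQ v).1 (hQ u).2
  rw [inner_sub_right] at h1
  rw [inner_sub_left] at h2
  linarith

/-- Pythagoras for a projection. -/
lemma proj_pyth {K : Submodule ℝ H} {Q : H → H}
    (hQ : ∀ x, Q x ∈ K ∧ x - Q x ∈ Kᗮ) (u : H) :
    ‖Q u‖ ^ 2 = ‖u‖ ^ 2 - ‖Q u - u‖ ^ 2 := by
  have h1 : ⟪Q u, u - Q u⟫ = 0 :=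
    Submodule.inner_right_of_mem_orthogonal (hQ u).1 (hQ u).2
  have h2 : ‖Q u + (u - Q u)‖ ^ 2 = ‖Q u‖ ^ 2 + 2 * ⟪Q u, u - Q u⟫ + ‖u - Q u‖ ^ 2 :=
    norm_add_sq_real _ _
  rw [h1] at h2
  simp only [add_sub_cancel] at h2
  rw [← norm_neg (Q u - u), neg_sub]
  linarith

end Aux

/-- For closed subspaces `L, Lₙ` of a separable Hilbert space with orthogonal
projections `P, Pₙ`: `‖Pₙ x − x‖ → ‖P x − x‖` for all `x` iff `Pₙ x → P x`
for all `x`. -/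
theorem wijsman_iff_strong_convergence_of_projections {H : Type*}
    [NormedAddCommGroup H] [InnerProductSpace ℝ H] [CompleteSpace H]
    [TopologicalSpace.SeparableSpace H]
    (L : Submodule ℝ H) (Ln : ℕ → Submodule ℝ H)
    (hL : IsClosed (L : Set H)) (hLn : ∀ n, IsClosed ((Ln n : Submodule ℝ H) : Set H))
    (P : H → H) (Pn : ℕ → H → H)
    (hP : ∀ x, P x ∈ L ∧ x - P x ∈ Lᗮ)
    (hPn : ∀ n x, Pn n x ∈ Ln n ∧ x - Pn n x ∈ (Ln n)ᗮ) :
    (∀ x, Tendsto (fun n => ‖Pn n x - x‖) atTop (nhds ‖P x - x‖)) ↔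
      (∀ x, Tendsto (fun n => Pn n x) atTop (nhds (P x))) := by
  constructor
  · intro h x
    -- `Pₙ (P x) → P x` since `‖Pₙ (P x) - P x‖ → ‖P (P x) - P x‖ = 0`.
    have hPPx : P (P x) = P x := proj_fix hP (hP x).1
    have h0 : Tendsto (fun n => ‖Pn n (P x) - P x‖) atTop (nhds 0) := by
      have := h (P x)
      rwa [hPPx, sub_self, norm_zero] at this
    have htend : Tendsto (fun n => Pn n (P x)) atTop (nhds (P x)) := by
      rw [tendsto_iff_norm_sub_tendsto_zero]; exact h0
    -- inner products converge
    have hinner : Tendsto (fun n => @inner ℝ H _ (Pn n x) (P x)) atTop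
        (nhds (‖P x‖ ^ 2)) := by
      have h1 : Tendsto (fun n => @inner ℝ H _ x (Pn n (P x))) atTop
          (nhds (@inner ℝ H _ x (P x))) :=
        Filter.Tendsto.inner tendsto_const_nhds htend
      have h2 : @inner ℝ H _ x (P x) = ‖P x‖ ^ 2 := by
        have hz : @inner ℝ H _ (x - P x) (P x) = 0 :=
          Submodule.inner_left_of_mem_orthogonal (hP x).1 (hP x).2
        rw [inner_sub_left] at hz
        rw [← real_inner_self_eq_norm_sq]
        linarith
      have h3 : ∀ n, @inner ℝ H _ (Pn n x) (P x) = @inner ℝ H _ x (Pn n (P x)) :=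
        fun n => proj_selfadj (hPn n) x (P x)
      rw [h2] at h1
      exact h1.congr fun n => (h3 n).symm
    -- norms converge
    have hnormsq : Tendsto (fun n => ‖Pn n x‖ ^ 2) atTop (nhds (‖P x‖ ^ 2)) := by
      have h1 : Tendsto (fun n => ‖x‖ ^ 2 - ‖Pn n x - x‖ ^ 2) atTop
          (nhds (‖x‖ ^ 2 - ‖P x - x‖ ^ 2)) :=
        tendsto_const_nhds.sub ((h x).pow 2)
      rw [← proj_pyth hP x] at h1
      exact h1.congr fun n => (proj_pyth (hPn n) x).symm
    -- conclude
    have hsq : Tendsto (fun n => ‖Pn n x - P x‖ ^ 2) atTop (nhds 0) := by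
      have key : ∀ n, ‖Pn n x - P x‖ ^ 2 =
          ‖Pn n x‖ ^ 2 - 2 * @inner ℝ H _ (Pn n x) (P x) + ‖P x‖ ^ 2 := fun n => by
        rw [@norm_sub_sq_real H _ _ (Pn n x) (P x)]
      have h1 : Tendsto (fun n =>
          ‖Pn n x‖ ^ 2 - 2 * @inner ℝ H _ (Pn n x) (P x) + ‖P x‖ ^ 2) atTop
          (nhds (‖P x‖ ^ 2 - 2 * ‖P x‖ ^ 2 + ‖P x‖ ^ 2)) :=
        (hnormsq.sub (hinner.const_mul 2)).add tendsto_const_nhds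
      have : (‖P x‖ ^ 2 - 2 * ‖P x‖ ^ 2 + ‖P x‖ ^ 2 : ℝ) = 0 := by ring
      rw [this] at h1
      exact h1.congr fun n => (key n).symm
    rw [tendsto_iff_norm_sub_tendsto_zero]
    have := hsq.sqrt
    rw [Real.sqrt_zero] at this
    exact this.congr fun n => by rw [Real.sqrt_sq (norm_nonneg _)]
  · intro h x
    exact ((h x).sub tendsto_const_nhds).norm
end

section
/- Let H be a separable Hilbert space, L a closed subspace with orthogonal projection P, and L_n closed subspaces with projections P_n. If ‖P_n x − x‖ → ‖P x − x‖ for all x, then for each x, ‖P x − P_n x‖² = ‖P x − x‖² + o(1) − ‖P_n x − x‖², hence P_n x → P x. -/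
/-!
Put `y = P x`. Since `y ∈ L`, the hypothesis at `y` gives `Pₙ y → y`. As `Pₙ y ∈ Lₙ`, Pythagoras
gives `‖Pₙ y - x‖² = ‖Pₙ y - Pₙ x‖² + ‖Pₙ x - x‖²`, and both `‖Pₙ y - x‖` and `‖Pₙ x - x‖` tend to
`‖y - x‖`, so `‖Pₙ y - Pₙ x‖ → 0`.
-/

open Filter Topology

theorem Filter.Tendsto.of_dist_sq_eq_add {α ι : Type*} [PseudoMetricSpace α] {l : Filter ι}
    {u v : ι → α} {x y : α} (hu : Tendsto u l (𝓝 y))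
    (hv : Tendsto (fun i => dist (v i) x) l (𝓝 (dist y x)))
    (hsplit : ∀ i, dist (u i) x ^ 2 = dist (u i) (v i) ^ 2 + dist (v i) x ^ 2) :
    Tendsto v l (𝓝 y) := by
  have hsq : Tendsto (fun i => dist (u i) (v i) ^ 2) l (𝓝 0) := by
    have := ((hu.dist (tendsto_const_nhds (x := x))).pow 2).sub (hv.pow 2)
    rw [sub_self] at this
    exact this.congr fun i => by rw [hsplit i]; ring
  refine hu.congr_dist ?_
  simpa [Function.comp_def, Real.sqrt_sq dist_nonneg] using
    (Real.continuous_sqrt.tendsto 0).comp hsq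

namespace Submodule

variable {E : Type*} [NormedAddCommGroup E] [InnerProductSpace ℝ E] {K : Submodule ℝ E}
  {x p : E}

theorem dist_sq_eq_add_of_sub_mem_orthogonal (hp : p ∈ K) (hxp : x - p ∈ Kᗮ) {y : E}
    (hy : y ∈ K) : dist y x ^ 2 = dist y p ^ 2 + dist p x ^ 2 := by
  have horth : inner ℝ (y - p) (x - p) = 0 :=
    K.inner_right_of_mem_orthogonal (K.sub_mem hy hp) hxp
  rw [dist_eq_norm, dist_eq_norm, dist_eq_norm, norm_sub_rev p x,
    ← sub_sub_sub_cancel_right y x p, norm_sub_sq_real, horth]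
  ring

theorem eq_of_mem_of_sub_mem_orthogonal (hp : p ∈ K) (hxp : x - p ∈ Kᗮ) (hx : x ∈ K) :
    p = x :=
  (sub_eq_zero.mp (disjoint_def.mp K.orthogonal_disjoint _ (K.sub_mem hx hp) hxp)).symm

end Submodule

theorem strong_convergence_of_projections_of_wijsman_general {H : Type*}
    [NormedAddCommGroup H] [InnerProductSpace ℝ H]
    (L : Submodule ℝ H) (Ln : ℕ → Submodule ℝ H)
    (P : H → H) (Pn : ℕ → H → H)
    (hP : ∀ x, P x ∈ L ∧ x - P x ∈ Lᗮ)
    (hPn : ∀ n x, Pn n x ∈ Ln n ∧ x - Pn n x ∈ (Ln n)ᗮ)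
    (h : ∀ x, Tendsto (fun n => ‖Pn n x - x‖) atTop (nhds ‖P x - x‖)) :
    ∀ x, Tendsto (fun n => Pn n x) atTop (nhds (P x)) := by
  intro x
  simp only [← dist_eq_norm] at h
  have hPP : P (P x) = P x :=
    Submodule.eq_of_mem_of_sub_mem_orthogonal (hP (P x)).1 (hP (P x)).2 (hP x).1
  have hPnP : Tendsto (fun n => Pn n (P x)) atTop (𝓝 (P x)) :=
    tendsto_iff_dist_tendsto_zero.mpr (by simpa [hPP] using h (P x))
  exact hPnP.of_dist_sq_eq_add (h x) fun n =>
    Submodule.dist_sq_eq_add_of_sub_mem_orthogonal (hPn n x).1 (hPn n x).2 (hPn n (P x)).1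

/-- Nontrivial direction: if `‖Pₙ x − x‖ → ‖P x − x‖` for all `x`, then the
orthogonal projections converge strongly: `Pₙ x → P x` for every `x`. -/
theorem strong_convergence_of_projections_of_wijsman {H : Type*}
    [NormedAddCommGroup H] [InnerProductSpace ℝ H] [CompleteSpace H]
    [TopologicalSpace.SeparableSpace H]
    (L : Submodule ℝ H) (Ln : ℕ → Submodule ℝ H)
    (hL : IsClosed (L : Set H)) (hLn : ∀ n, IsClosed ((Ln n : Submodule ℝ H) : Set H))
    (P : H → H) (Pn : ℕ → H → H)
    (hP : ∀ x, P x ∈ L ∧ x - P x ∈ Lᗮ)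
    (hPn : ∀ n x, Pn n x ∈ Ln n ∧ x - Pn n x ∈ (Ln n)ᗮ)
    (h : ∀ x, Tendsto (fun n => ‖Pn n x - x‖) atTop (nhds ‖P x - x‖)) :
    ∀ x, Tendsto (fun n => Pn n x) atTop (nhds (P x)) :=
  strong_convergence_of_projections_of_wijsman_general L Ln P Pn hP hPn h
end

section
/- Let X be a Polish space. The map μ ↦ sup_{x ∈ X} μ({x}) from Prob(X) (with the weak topology) to [0,1] is upper semicontinuous. -/
open MeasureTheory Metric Filter Set

open scoped ENNReal NNReal Topology

/-!
If every atom of `μ` has mass `< y`, each point has a neighbourhood whose closure still has mass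
`< y`. By tightness, finitely many of these neighbourhoods cover a compact set carrying all but
`< y` of the mass, so `X` is covered by finitely many closed sets of `μ`-mass `< y`: their closures
and the complement of their union. By the portmanteau theorem the same finitely many closed sets
have mass `< y` under every `ν` close to `μ`, and every atom of `ν` lies in one of them.
-/

theorem exists_isOpen_mem_measure_closure_lt {X : Type*} [MetricSpace X] [MeasurableSpace X]
    [OpensMeasurableSpace X] (μ : Measure X) [IsFiniteMeasure μ] {x : X} {y : ℝ≥0∞}
    (h : μ {x} < y) : ∃ U, IsOpen U ∧ x ∈ U ∧ μ (closure U) < y := by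
  have hlim := tendsto_measure_cthickening_of_isClosed (μ := μ)
    ⟨1, one_pos, measure_ne_top μ _⟩ (isClosed_singleton (x := x))
  obtain ⟨r, hμr, hr⟩ := (((hlim.eventually_lt_const h).filter_mono nhdsWithin_le_nhds).and
    (self_mem_nhdsWithin : Ioi (0 : ℝ) ∈ 𝓝[>] 0)).exists
  refine ⟨ball x r, isOpen_ball, mem_ball_self hr, (measure_mono ?_).trans_lt hμr⟩
  rw [cthickening_singleton x hr.le]
  exact closure_ball_subset_closedBall

theorem exists_finite_isClosed_cover_measure_lt {X : Type*} [MetricSpace X] [MeasurableSpace X]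
    [OpensMeasurableSpace X] (μ : Measure X) [IsFiniteMeasure μ] [μ.InnerRegularCompactLTTop]
    {y : ℝ≥0∞} (h : ∀ x, μ {x} < y) :
    ∃ s : Set (Set X), s.Finite ∧ (∀ F ∈ s, IsClosed F ∧ μ F < y) ∧ ⋃₀ s = univ := by
  rcases isEmpty_or_nonempty X with hX | ⟨⟨x₀⟩⟩
  · exact ⟨∅, finite_empty, by simp, by simp [eq_iff_true_of_subsingleton]⟩
  choose U hUo hxU hUμ using fun x => exists_isOpen_mem_measure_closure_lt μ (h x)
  obtain ⟨K, -, hK, hKμ⟩ := MeasurableSet.univ.exists_isCompact_sdiff_lt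
    (measure_ne_top μ univ) (pos_of_gt (h x₀)).ne'
  obtain ⟨t, hKt⟩ := hK.elim_finite_subcover U hUo fun x _ => mem_iUnion.2 ⟨x, hxU x⟩
  set V := ⋃ x ∈ t, U x
  refine ⟨insert Vᶜ ((fun x => closure (U x)) '' t), (t.finite_toSet.image _).insert _, ?_, ?_⟩
  · rintro F (rfl | ⟨x, -, rfl⟩)
    · refine ⟨(isOpen_biUnion fun x _ => hUo x).isClosed_compl, (measure_mono ?_).trans_lt hKμ⟩
      exact fun z hz => ⟨mem_univ z, fun hzK => hz (hKt hzK)⟩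
    · exact ⟨isClosed_closure, hUμ x⟩
  · refine eq_univ_of_forall fun z => ?_
    by_cases hz : z ∈ V
    · obtain ⟨x, hx, hzx⟩ := mem_iUnion₂.1 hz
      exact ⟨_, Or.inr ⟨x, hx, rfl⟩, subset_closure hzx⟩
    · exact ⟨_, Or.inl rfl, hz⟩

theorem ProbabilityMeasure.upperSemicontinuous_measure_of_isClosed {Ω : Type*}
    [MeasurableSpace Ω] [TopologicalSpace Ω] [OpensMeasurableSpace Ω] [HasOuterApproxClosed Ω]
    {F : Set Ω} (hF : IsClosed F) :
    UpperSemicontinuous fun ν : ProbabilityMeasure Ω => (ν : Measure Ω) F := fun _ _ hy =>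
  eventually_lt_of_limsup_lt
    ((ProbabilityMeasure.limsup_measure_closed_le_of_tendsto tendsto_id hF).trans_lt hy)

theorem ProbabilityMeasure.eventually_forall_apply_singleton_lt {X : Type*} [TopologicalSpace X]
    [PolishSpace X] [MeasurableSpace X] [BorelSpace X] {μ : ProbabilityMeasure X} {y : ℝ≥0}
    (h : ∀ x, μ {x} < y) : ∀ᶠ ν in 𝓝 μ, ∀ x, ν {x} < y := by
  let := TopologicalSpace.upgradeIsCompletelyMetrizable X
  simp_rw [← ENNReal.coe_lt_coe, ProbabilityMeasure.ennreal_coeFn_eq_coeFn_toMeasure] at h ⊢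
  obtain ⟨s, hs, hsμ, hsX⟩ := exists_finite_isClosed_cover_measure_lt (μ : Measure X) h
  filter_upwards [(eventually_all_finite hs).2 fun F hF =>
    upperSemicontinuous_measure_of_isClosed (hsμ F hF).1 μ _ (hsμ F hF).2] with ν hν x
  obtain ⟨F, hF, hxF⟩ := mem_sUnion.1 (hsX ▸ mem_univ x)
  exact (measure_mono (singleton_subset_iff.2 hxF)).trans_lt (hν F hF)

/-- For a Polish space `X`, the map `μ ↦ sup_{x ∈ X} μ({x})` is upper
semicontinuous on the space of Borel probability measures with the weak
topology. -/
theorem sup_atom_upperSemicontinuous {X : Type*} [TopologicalSpace X] [PolishSpace X]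
    [MeasurableSpace X] [BorelSpace X] :
    UpperSemicontinuous (fun μ : ProbabilityMeasure X => ⨆ x : X, (μ {x} : ℝ)) := by
  intro μ y hy
  have := μ.nonempty
  -- Pointwise `ν {x} < z` only bounds the supremum by `z`, hence the room between `z` and `y`.
  obtain ⟨z, hμz, hzy⟩ := exists_between hy
  lift z to ℝ≥0 using (Real.iSup_nonneg fun x => (μ {x}).coe_nonneg).trans hμz.le
  have hbdd : BddAbove (range fun x => (μ {x} : ℝ)) :=
    ⟨1, by rintro _ ⟨x, rfl⟩; exact_mod_cast μ.apply_le_one {x}⟩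
  have hatoms : ∀ x, μ {x} < z := fun x => NNReal.coe_lt_coe.1 ((le_ciSup hbdd x).trans_lt hμz)
  filter_upwards [ProbabilityMeasure.eventually_forall_apply_singleton_lt hatoms] with ν hν
  exact (ciSup_le fun x => NNReal.coe_le_coe.2 (hν x).le).trans_lt hzy
end

section
/- Let X be a Polish space and μ a Borel probability measure on X. Then sup_{x∈X} μ({x}) = inf over finite open covers (U_1,...,U_n) of X of max_k μ(cl(U_k)), where cl denotes closure. -/
/-!
The inequality `≤` holds because each point lies in some member of the cover. For `≥`, fix
`ε > 0`. Every point `x` is the centre of a ball whose closure has measure `< μ {x} + ε`, and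
tightness gives a compact `K` with `μ Kᶜ < ε`. Finitely many of these balls cover `K`; by
regularity one more open set, whose closure misses `K`, completes them to a finite open cover of
`X`, and the closure of every member of it has measure `< sup_x μ {x} + ε`.
-/

open MeasureTheory Metric Set Filter Topology ENNReal

section

variable {X : Type*}

theorem iInf_fin_open_cover_le [TopologicalSpace X] {α : Type*} [CompleteLattice α]
    (f : Set X → α) {ι : Type*} [Finite ι] (U : ι → Set X) (hU : ∀ i, IsOpen (U i))
    (hcov : ⋃ i, U i = univ) :
    (⨅ (n : ℕ) (V : Fin n → Set X) (_ : ∀ k, IsOpen (V k)) (_ : ⋃ k, V k = univ),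
      ⨆ k, f (V k)) ≤ ⨆ i, f (U i) := by
  obtain ⟨n, ⟨e⟩⟩ := Finite.exists_equiv_fin ι
  calc _ ≤ ⨆ k, f (U (e.symm k)) :=
        iInf₂_le_of_le n (U ∘ e.symm) <| iInf₂_le (fun k => hU _) <| by
          rw [← hcov]; exact e.symm.iSup_comp (g := U)
    _ = ⨆ i, f (U i) := e.symm.iSup_comp (g := fun i => f (U i))

theorem iSup_measure_singleton_le_iSup_measure_closure [TopologicalSpace X] [MeasurableSpace X]
    (μ : Measure X) {ι : Type*} {U : ι → Set X} (hcov : ⋃ i, U i = univ) :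
    ⨆ x, μ {x} ≤ ⨆ i, μ (closure (U i)) := by
  refine iSup_le fun x => ?_
  obtain ⟨i, hi⟩ := mem_iUnion.mp (hcov ▸ mem_univ x)
  exact (measure_mono (singleton_subset_iff.mpr (subset_closure hi))).trans (le_iSup_of_le i le_rfl)

theorem exists_isOpen_measure_closure_lt [MetricSpace X] [MeasurableSpace X]
    [OpensMeasurableSpace X] (μ : Measure X) [IsFiniteMeasure μ] (x : X) {c : ℝ≥0∞}
    (hc : μ {x} < c) : ∃ U, IsOpen U ∧ x ∈ U ∧ μ (closure U) < c := by
  have hlim : Tendsto (fun r => μ (cthickening r {x})) (𝓝[>] 0) (𝓝 (μ {x})) :=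
    (tendsto_measure_cthickening_of_isClosed ⟨1, one_pos, measure_ne_top μ _⟩
      isClosed_singleton).mono_left nhdsWithin_le_nhds
  obtain ⟨r, hμr, hr⟩ := ((hlim.eventually (gt_mem_nhds hc)).and self_mem_nhdsWithin).exists
  refine ⟨ball x r, isOpen_ball, mem_ball_self hr, lt_of_le_of_lt (measure_mono ?_) hμr⟩
  rw [cthickening_singleton x (le_of_lt hr)]
  exact closure_ball_subset_closedBall

theorem IsCompact.exists_finset_union_isOpen_eq_univ [TopologicalSpace X] [RegularSpace X]
    {K : Set X} (hK : IsCompact K) (U : X → Set X) (hU : ∀ x, IsOpen (U x))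
    (hxU : ∀ x ∈ K, x ∈ U x) :
    ∃ (t : Finset X) (V : Set X), IsOpen V ∧ closure V ⊆ Kᶜ ∧ V ∪ ⋃ x ∈ t, U x = univ := by
  obtain ⟨t, ht⟩ := hK.elim_finite_subcover U hU fun x hx => mem_iUnion.mpr ⟨x, hxU x hx⟩
  obtain ⟨O, hOo, hKO, hOt⟩ := hK.exists_isOpen_closure_subset
    ((isOpen_biUnion fun x _ => hU x).mem_nhdsSet.mpr ht)
  refine ⟨t, (closure O)ᶜ, isClosed_closure.isOpen_compl, ?_, ?_⟩
  · rw [closure_compl, compl_subset_compl]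
    exact hKO.trans (interior_maximal subset_closure hOo)
  · refine eq_univ_of_forall fun y => ?_
    by_cases hy : y ∈ closure O
    · exact Or.inr (hOt hy)
    · exact Or.inl hy

end

/-- For a Borel probability measure `μ` on a Polish space `X`,
`sup_x μ({x})` equals the infimum over finite open covers `(U_1, ..., U_n)` of
`X` of `max_k μ(closure (U_k))`. -/
theorem sup_atom_eq_inf_covers {X : Type*} [TopologicalSpace X] [PolishSpace X]
    [MeasurableSpace X] [BorelSpace X]
    (μ : Measure X) [IsProbabilityMeasure μ] :
    (⨆ x : X, μ {x}) =
      ⨅ (n : ℕ) (U : Fin n → Set X) (_ : ∀ k, IsOpen (U k)) (_ : (⋃ k, U k) = Set.univ),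
        ⨆ k, μ (closure (U k)) := by
  let _ := TopologicalSpace.upgradeIsCompletelyMetrizable X
  refine le_antisymm (le_iInf₂ fun n U => le_iInf₂ fun _ hcov =>
    iSup_measure_singleton_le_iSup_measure_closure μ hcov) ?_
  refine ENNReal.le_of_forall_pos_le_add fun ε hε hs => ?_
  have hε' : (0 : ℝ≥0∞) < ε := by exact_mod_cast hε
  choose U hUo hxU hμU using fun x => exists_isOpen_measure_closure_lt μ x
    ((le_iSup (fun x => μ {x}) x).trans_lt (ENNReal.lt_add_right hs.ne hε'.ne'))
  obtain ⟨K, hK, hμK⟩ := exists_isCompact_closure_measure_compl_lt μ ε hε'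
  obtain ⟨t, V, hVo, hVK, hcov⟩ :=
    hK.exists_finset_union_isOpen_eq_univ U hUo fun x _ => hxU x
  calc _ ≤ ⨆ i : Option t, μ (closure (i.elim V fun x => U x)) :=
        iInf_fin_open_cover_le (fun s => μ (closure s)) (fun i : Option t => i.elim V fun x => U x)
          (fun i => i.rec hVo fun x => hUo x) (by rw [iUnion_option, ← hcov, iUnion_subtype]; rfl)
    _ ≤ (⨆ x, μ {x}) + ε := by
      rw [iSup_option]
      refine sup_le ?_ (iSup_le fun x => (hμU x).le)
      calc μ (closure V) ≤ μ (closure K)ᶜ := measure_mono hVK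
        _ ≤ μ Kᶜ := measure_mono (compl_subset_compl.mpr subset_closure)
        _ ≤ (⨆ x, μ {x}) + ε := hμK.le.trans le_add_self
end

section
/- Let (Ω, F, P) be a probability space and let E, E_1, E_2, ... be sub-σ-fields such that the conditional expectation operators satisfy E[f | E_n] → E[f | E] in L² for every f ∈ L². Let f ∈ L_0(Ω, F, P; X) for a Polish space X. Then the conditional distributions P_{f | E_n} converge to P_{f | E} in L_0(Ω, F, P; Prob(X)). -/
/-!
For bounded continuous `φ`, `∫ φ dνₙ = E[φ ∘ f | Eₙ]` converges in probability to
`∫ φ dν = E[φ ∘ f | E]`, since convergence in `L²` implies convergence in probability.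
By separability the law of `f` is concentrated, up to an arbitrarily small mass, on a finite union
of `r/2`-balls; testing `ν` against its `r/2`-thickened indicator shows, by Markov's inequality,
that the union `U` of the concentric `r`-balls has `ν(ω)(U) ≥ 1 - r` outside an event of small
probability. On that event, if the thickened indicators of the
finitely many unions of these balls have `ν(ω)`- and `νₙ(ω)`-integrals within `r` of each other,
then `ν(ω) B ≤ νₙ(ω) (thickening (3r) B) + 2r` for every Borel `B`: up to `Uᶜ`, `B` is covered by
the balls meeting it. Between probability measures this one-sided bound already controls the
Lévy–Prokhorov distance, so a union bound over the finitely many test functions concludes.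
-/

open MeasureTheory Filter Metric Set
open scoped ENNReal BoundedContinuousFunction

section ThickenedIndicator

variable {X : Type*} [PseudoEMetricSpace X]

noncomputable def thickenedIndicatorReal {δ : ℝ} (hδ : 0 < δ) (E : Set X) : X →ᵇ ℝ :=
  (thickenedIndicator hδ E).comp Subtype.val (LipschitzWith.subtype_val _)

@[simp]
lemma thickenedIndicatorReal_apply {δ : ℝ} (hδ : 0 < δ) (E : Set X) (x : X) :
    thickenedIndicatorReal hδ E x = thickenedIndicator hδ E x := rfl

lemma indicator_one_le_thickenedIndicatorReal {δ : ℝ} (hδ : 0 < δ) (E : Set X) (x : X) :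
    E.indicator 1 x ≤ thickenedIndicatorReal hδ E x := by
  by_cases hx : x ∈ E
  · simp [hx, thickenedIndicator_one hδ E hx]
  · simp [hx]

lemma thickenedIndicatorReal_le_indicator_one {δ : ℝ} (hδ : 0 < δ) (E : Set X) (x : X) :
    thickenedIndicatorReal hδ E x ≤ (thickening δ E).indicator 1 x := by
  by_cases hx : x ∈ thickening δ E
  · simpa [hx] using thickenedIndicator_le_one hδ E x
  · simp [hx, thickenedIndicator_zero hδ E hx]

variable [MeasurableSpace X] [OpensMeasurableSpace X] {μ : Measure X} [IsFiniteMeasure μ]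

lemma measureReal_le_integral_thickenedIndicatorReal {δ : ℝ} (hδ : 0 < δ) {E : Set X}
    (hE : MeasurableSet E) : μ.real E ≤ ∫ x, thickenedIndicatorReal hδ E x ∂μ := by
  rw [← integral_indicator_one hE]
  exact integral_mono ((integrable_const 1).indicator hE) (BoundedContinuousFunction.integrable _ _)
    (indicator_one_le_thickenedIndicatorReal hδ E)

lemma integral_thickenedIndicatorReal_le_measureReal {δ : ℝ} (hδ : 0 < δ) (E : Set X) :
    ∫ x, thickenedIndicatorReal hδ E x ∂μ ≤ μ.real (thickening δ E) := by
  rw [← integral_indicator_one isOpen_thickening.measurableSet]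
  exact integral_mono (BoundedContinuousFunction.integrable _ _)
    ((integrable_const 1).indicator isOpen_thickening.measurableSet)
    (thickenedIndicatorReal_le_indicator_one hδ E)

end ThickenedIndicator

section LevyProkhorov

variable {X : Type*} [PseudoMetricSpace X] [MeasurableSpace X] [OpensMeasurableSpace X]

lemma measureReal_le_measureReal_thickening_add_of_integral_le {μ μ' : Measure X}
    [IsFiniteMeasure μ] [IsFiniteMeasure μ'] {s : Finset X} {r a b : ℝ} (hr : 0 < r)
    (hμ : μ.real (⋃ c ∈ s, ball c r)ᶜ ≤ a)
    (h : ∀ t ∈ s.powerset, ∫ x, thickenedIndicatorReal hr (⋃ c ∈ t, ball c r) x ∂μ ≤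
      ∫ x, thickenedIndicatorReal hr (⋃ c ∈ t, ball c r) x ∂μ' + b)
    {B : Set X} : μ.real B ≤ μ'.real (thickening (3 * r) B) + (a + b) := by
  classical
  set t := s.filter fun c => (ball c r ∩ B).Nonempty
  set S := ⋃ c ∈ t, ball c r
  have hBS : B ⊆ S ∪ (⋃ c ∈ s, ball c r)ᶜ := by
    intro x hxB
    by_cases hx : x ∈ ⋃ c ∈ s, ball c r
    · obtain ⟨c, hc, hxc⟩ := mem_iUnion₂.1 hx
      exact Or.inl (mem_iUnion₂.2 ⟨c, Finset.mem_filter.2 ⟨hc, x, hxc, hxB⟩, hxc⟩)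
    · exact Or.inr hx
  have hSB : S ⊆ thickening (2 * r) B := by
    intro x hx
    obtain ⟨c, hc, hxc⟩ := mem_iUnion₂.1 hx
    obtain ⟨y, hyc, hyB⟩ := (Finset.mem_filter.1 hc).2
    refine mem_thickening_iff.2 ⟨y, hyB, ?_⟩
    linarith [dist_triangle_right x y c, mem_ball.1 hxc, mem_ball.1 hyc]
  have hS : MeasurableSet S := (isOpen_biUnion fun c _ => isOpen_ball).measurableSet
  have hthick : thickening r S ⊆ thickening (3 * r) B :=
    calc thickening r S ⊆ thickening r (thickening (2 * r) B) := thickening_subset_of_subset r hSB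
      _ ⊆ thickening (r + 2 * r) B := thickening_thickening_subset r (2 * r) B
      _ = thickening (3 * r) B := by ring_nf
  calc μ.real B ≤ μ.real S + μ.real (⋃ c ∈ s, ball c r)ᶜ :=
        (measureReal_mono hBS).trans (measureReal_union_le _ _)
    _ ≤ ∫ x, thickenedIndicatorReal hr S x ∂μ + a :=
        add_le_add (measureReal_le_integral_thickenedIndicatorReal hr hS) hμ
    _ ≤ ∫ x, thickenedIndicatorReal hr S x ∂μ' + b + a := by
        gcongr
        exact h t (Finset.mem_powerset.2 (Finset.filter_subset _ _))
    _ ≤ μ'.real (thickening (3 * r) B) + (a + b) := by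
        linarith [integral_thickenedIndicatorReal_le_measureReal (μ := μ') hr S,
          measureReal_mono (μ := μ') hthick]

lemma levyProkhorovDist_le_of_integral_le {μ μ' : Measure X}
    [IsProbabilityMeasure μ] [IsProbabilityMeasure μ'] {s : Finset X} {r a b : ℝ} (hr : 0 < r)
    (hμ : μ.real (⋃ c ∈ s, ball c r)ᶜ ≤ a)
    (h : ∀ t ∈ s.powerset, ∫ x, thickenedIndicatorReal hr (⋃ c ∈ t, ball c r) x ∂μ ≤
      ∫ x, thickenedIndicatorReal hr (⋃ c ∈ t, ball c r) x ∂μ' + b) :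
    levyProkhorovDist μ μ' ≤ max (3 * r) (a + b) := by
  refine levyProkhorovDist_le_of_forall_le μ μ' (le_max_of_le_left (by positivity))
    fun ε B hε _ => ?_
  calc μ B = ENNReal.ofReal (μ.real B) := (ofReal_measureReal).symm
    _ ≤ ENNReal.ofReal (μ'.real (thickening (3 * r) B) + (a + b)) := ENNReal.ofReal_le_ofReal
        (measureReal_le_measureReal_thickening_add_of_integral_le hr hμ h)
    _ ≤ μ' (thickening (3 * r) B) + ENNReal.ofReal (a + b) :=
        ENNReal.ofReal_add_le.trans (by rw [ofReal_measureReal])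
    _ ≤ μ' (thickening ε B) + ENNReal.ofReal ε := by
        gcongr
        · exact (le_max_left _ _).trans hε.le
        · exact (le_max_right _ _).trans hε.le

end LevyProkhorov

lemma exists_finset_measure_compl_iUnion_ball_lt {X : Type*} [PseudoMetricSpace X]
    [TopologicalSpace.SeparableSpace X] [MeasurableSpace X] [OpensMeasurableSpace X]
    (μ : Measure X) [IsFiniteMeasure μ] {r : ℝ} (hr : 0 < r) {κ : ℝ≥0∞} (hκ : 0 < κ) :
    ∃ s : Finset X, μ (⋃ c ∈ s, ball c r)ᶜ < κ := by
  classical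
  rcases isEmpty_or_nonempty X with hX | hX
  · exact ⟨∅, by simpa [Set.eq_empty_of_isEmpty] using hκ⟩
  obtain ⟨u, hu⟩ := TopologicalSpace.exists_dense_seq X
  set V : ℕ → Set X := fun N => (⋃ c ∈ (Finset.range N).image u, ball c r)ᶜ
  have hV : Antitone V := fun M N hMN => compl_subset_compl.2 <|
    biUnion_subset_biUnion_left <| Finset.coe_subset.2 <|
      Finset.image_subset_image (Finset.range_subset_range.2 hMN)
  have hV_empty : ⋂ N, V N = ∅ := by
    refine eq_empty_iff_forall_notMem.2 fun x hx => ?_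
    obtain ⟨i, hi⟩ := Metric.denseRange_iff.1 hu x r hr
    refine mem_iInter.1 hx (i + 1) (mem_iUnion₂.2 ⟨u i, ?_, mem_ball.2 hi⟩)
    exact Finset.mem_image_of_mem u (Finset.self_mem_range_succ i)
  have hV_meas (N : ℕ) : MeasurableSet (V N) :=
    (isOpen_biUnion fun c _ => isOpen_ball).isClosed_compl.measurableSet
  have hlim := tendsto_measure_iInter_atTop (fun N => (hV_meas N).nullMeasurableSet) hV
    ⟨0, measure_ne_top μ _⟩
  rw [hV_empty, measure_empty] at hlim
  obtain ⟨N, hN⟩ := (hlim.eventually (gt_mem_nhds hκ)).exists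
  exact ⟨(Finset.range N).image u, hN⟩

lemma measure_condExp_le_one_sub_le {Ω : Type*} {m m0 : MeasurableSpace Ω} {P : Measure Ω}
    [IsProbabilityMeasure P] (hm : m ≤ m0) {g : Ω → ℝ} (hg : Integrable g P)
    (hg_le : ∀ᵐ ω ∂P, g ω ≤ 1) {η : ℝ} (hη : 0 < η) :
    P {ω | P[g|m] ω ≤ 1 - η} ≤ ENNReal.ofReal ((1 - ∫ ω, g ω ∂P) / η) := by
  have hcond_le : P[g|m] ≤ᵐ[P] fun _ => 1 := by
    simpa only [condExp_const hm] using condExp_mono (m := m) hg (integrable_const 1) hg_le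
  have hmarkov := mul_meas_ge_le_integral_of_nonneg
    (hcond_le.mono fun ω h => sub_nonneg.2 h) ((integrable_const 1).sub integrable_condExp) η
  rw [integral_sub (integrable_const 1) integrable_condExp, integral_condExp hm] at hmarkov
  simp only [integral_const, probReal_univ, smul_eq_mul, one_mul] at hmarkov
  calc P {ω | P[g|m] ω ≤ 1 - η} = P {ω | η ≤ 1 - P[g|m] ω} := by
        congr 1; ext ω; exact show P[g|m] ω ≤ 1 - η ↔ η ≤ 1 - P[g|m] ω from le_sub_comm
    _ = ENNReal.ofReal (P.real {ω | η ≤ 1 - P[g|m] ω}) := (ofReal_measureReal).symm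
    _ ≤ ENNReal.ofReal ((1 - ∫ ω, g ω ∂P) / η) :=
        ENNReal.ofReal_le_ofReal ((le_div_iff₀ hη).2 (by linarith))

section CondDistrib

variable {Ω X : Type*} [MeasurableSpace X]

def IsCondDistrib [TopologicalSpace X] {m0 : MeasurableSpace Ω} (P : Measure Ω)
    (m : MeasurableSpace Ω) (f : Ω → X) (ρ : Ω → ProbabilityMeasure X) : Prop :=
  ∀ φ : X →ᵇ ℝ, (fun ω => ∫ x, φ x ∂(ρ ω : Measure X)) =ᵐ[P] P[fun ω => φ (f ω) | m]

variable [PseudoMetricSpace X] [OpensMeasurableSpace X] {m m0 : MeasurableSpace Ω}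
  {P : Measure Ω} [IsProbabilityMeasure P] {f : Ω → X} {ρ : Ω → ProbabilityMeasure X}

lemma IsCondDistrib.measure_measureReal_compl_thickening_gt_le (hρ : IsCondDistrib P m f ρ)
    (hm : m ≤ m0) (hf : AEMeasurable f P) {K : Set X} (hK : MeasurableSet K) {δ a : ℝ}
    (hδ : 0 < δ) (ha : 0 < a) :
    P {ω | a < (ρ ω : Measure X).real (thickening δ K)ᶜ} ≤
      ENNReal.ofReal ((P.map f).real Kᶜ / a) := by
  have := Measure.isProbabilityMeasure_map hf
  set χ := thickenedIndicatorReal hδ K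
  have hχ_meas : AEStronglyMeasurable χ (P.map f) := χ.continuous.aestronglyMeasurable
  have hχf : Integrable (fun ω => χ (f ω)) P :=
    (integrable_map_measure hχ_meas hf).1 (χ.integrable _)
  have hmean : (P.map f).real K ≤ ∫ ω, χ (f ω) ∂P := by
    rw [← integral_map hf hχ_meas]
    exact measureReal_le_integral_thickenedIndicatorReal hδ hK
  have hsubset : {ω | a < (ρ ω : Measure X).real (thickening δ K)ᶜ} ≤ᵐ[P]
      {ω | P[fun ω => χ (f ω)|m] ω ≤ 1 - a} := by
    filter_upwards [hρ χ] with ω hω hlt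
    have hint := integral_thickenedIndicatorReal_le_measureReal (μ := (ρ ω : Measure X)) hδ K
    change a < _ at hlt
    rw [probReal_compl_eq_one_sub isOpen_thickening.measurableSet] at hlt
    change _ ≤ 1 - a
    rw [← hω]
    linarith
  calc P {ω | a < (ρ ω : Measure X).real (thickening δ K)ᶜ}
      ≤ P {ω | P[fun ω => χ (f ω)|m] ω ≤ 1 - a} := measure_mono_ae hsubset
    _ ≤ ENNReal.ofReal ((1 - ∫ ω, χ (f ω) ∂P) / a) :=
        measure_condExp_le_one_sub_le hm hχf
          (ae_of_all _ fun ω => NNReal.coe_le_one.2 (thickenedIndicator_le_one hδ K (f ω))) ha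
    _ ≤ ENNReal.ofReal ((P.map f).real Kᶜ / a) := by
        rw [probReal_compl_eq_one_sub hK]
        gcongr

lemma IsCondDistrib.exists_finset_measure_measureReal_compl_iUnion_ball_gt_le
    [TopologicalSpace.SeparableSpace X] (hρ : IsCondDistrib P m f ρ) (hm : m ≤ m0)
    (hf : AEMeasurable f P) {r : ℝ} (hr : 0 < r) {θ : ℝ≥0∞} (hθ : 0 < θ) :
    ∃ s : Finset X, P {ω | r < (ρ ω : Measure X).real (⋃ c ∈ s, ball c r)ᶜ} ≤ θ := by
  have := Measure.isProbabilityMeasure_map hf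
  obtain ⟨s, hs⟩ := exists_finset_measure_compl_iUnion_ball_lt (P.map f) (half_pos hr)
    (ENNReal.mul_pos hθ.ne' (ENNReal.ofReal_pos.2 hr).ne')
  have hthick : thickening (r / 2) (⋃ c ∈ s, ball c (r / 2)) ⊆ ⋃ c ∈ s, ball c r := by
    simp only [thickening_iUnion]
    exact iUnion₂_mono fun c _ => (thickening_ball c _ _).trans_eq (by rw [add_halves])
  refine ⟨s, (measure_mono fun ω hω => ?_).trans <|
    (hρ.measure_measureReal_compl_thickening_gt_le (K := ⋃ c ∈ s, ball c (r / 2)) hm hf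
      (isOpen_biUnion fun c _ => isOpen_ball).measurableSet (half_pos hr) hr).trans ?_⟩
  · exact lt_of_lt_of_le hω (measureReal_mono (compl_subset_compl.2 hthick))
  · rw [ENNReal.ofReal_div_of_pos hr, ofReal_measureReal]
    exact ENNReal.div_le_of_le_mul hs.le

end CondDistrib

theorem tendstoInMeasure_levyProkhorov_of_tendstoInMeasure_integral {Ω X ι : Type*}
    {m0 : MeasurableSpace Ω} [PseudoMetricSpace X] [MeasurableSpace X] [OpensMeasurableSpace X]
    {P : Measure Ω} {l : Filter ι} {ρs : ι → Ω → ProbabilityMeasure X}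
    {ρ : Ω → ProbabilityMeasure X}
    (hint : ∀ φ : X →ᵇ ℝ, TendstoInMeasure P (fun i ω => ∫ x, φ x ∂(ρs i ω : Measure X)) l
      fun ω => ∫ x, φ x ∂(ρ ω : Measure X))
    (htight : ∀ r > 0, ∀ θ : ℝ≥0∞, 0 < θ → ∃ s : Finset X,
      P {ω | r < (ρ ω : Measure X).real (⋃ c ∈ s, ball c r)ᶜ} ≤ θ) :
    TendstoInMeasure P
      (fun i ω => (LevyProkhorov.toMeasureEquiv (α := ProbabilityMeasure X)).symm (ρs i ω)) l
      fun ω => (LevyProkhorov.toMeasureEquiv (α := ProbabilityMeasure X)).symm (ρ ω) := by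
  rw [tendstoInMeasure_iff_dist]
  intro ε hε
  set r := ε / 4 with hr_def
  have hr : 0 < r := by positivity
  rw [ENNReal.tendsto_nhds_zero]
  intro e he
  obtain ⟨s, hs⟩ := htight r hr (e / 2) (ENNReal.half_pos he.ne')
  set g : Finset X → X →ᵇ ℝ := fun t => thickenedIndicatorReal hr (⋃ c ∈ t, ball c r)
  set D : ι → Finset X → Set Ω := fun i t =>
    {ω | r ≤ dist (∫ x, g t x ∂(ρs i ω : Measure X)) (∫ x, g t x ∂(ρ ω : Measure X))}
  have hD : Tendsto (fun i => ∑ t ∈ s.powerset, P (D i t)) l (nhds 0) := by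
    simpa using tendsto_finsetSum s.powerset fun t _ =>
      tendstoInMeasure_iff_dist.1 (hint (g t)) r hr
  have hsubset : ∀ i, {ω | ε ≤ dist
      ((LevyProkhorov.toMeasureEquiv (α := ProbabilityMeasure X)).symm (ρs i ω))
      ((LevyProkhorov.toMeasureEquiv (α := ProbabilityMeasure X)).symm (ρ ω))} ⊆
      {ω | r < (ρ ω : Measure X).real (⋃ c ∈ s, ball c r)ᶜ} ∪ ⋃ t ∈ s.powerset, D i t := by
    intro i ω hω
    by_contra hout
    simp only [mem_union, mem_iUnion₂, not_or, not_exists, mem_ofPred_eq, not_lt, not_le,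
      D] at hout
    have hLP := levyProkhorovDist_le_of_integral_le (μ' := ρs i ω) (b := r) hr hout.1
      fun t ht => by linarith [(abs_sub_lt_iff.1 (Real.dist_eq _ _ ▸ hout.2 t ht)).2]
    change ε ≤ levyProkhorovDist (ρs i ω : Measure X) (ρ ω : Measure X) at hω
    -- the comparison is one-sided, so only the limit `ρ` has to be tight
    rw [levyProkhorovDist_comm] at hω
    have : max (3 * r) (r + r) < ε := max_lt (by linarith) (by linarith)
    linarith
  filter_upwards [hD.eventually (ge_mem_nhds (ENNReal.half_pos he.ne'))] with i hi
  calc P _ ≤ P ({ω | r < (ρ ω : Measure X).real (⋃ c ∈ s, ball c r)ᶜ} ∪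
        ⋃ t ∈ s.powerset, D i t) := measure_mono (hsubset i)
    _ ≤ P {ω | r < (ρ ω : Measure X).real (⋃ c ∈ s, ball c r)ᶜ} +
        ∑ t ∈ s.powerset, P (D i t) :=
        (measure_union_le _ _).trans (add_le_add le_rfl (measure_biUnion_finset_le _ _))
    _ ≤ e / 2 + e / 2 := add_le_add hs hi
    _ = e := ENNReal.add_halves e

theorem condDistrib_continuous_in_sigma_field_general {Ω X : Type*} {m0 : MeasurableSpace Ω}
    (P : Measure Ω) [IsProbabilityMeasure P]
    [MetricSpace X] [TopologicalSpace.SeparableSpace X]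
    [MeasurableSpace X] [BorelSpace X]
    (E : MeasurableSpace Ω) (En : ℕ → MeasurableSpace Ω)
    (hE : E ≤ m0)
    (hconv : ∀ g : Ω → ℝ, MemLp g 2 P →
      Tendsto (fun n => eLpNorm (P[g | En n] - P[g | E]) 2 P) atTop (nhds 0))
    (f : Ω → X) (hf : AEMeasurable f P)
    (ν : Ω → ProbabilityMeasure X) (νn : ℕ → Ω → ProbabilityMeasure X)
    (hν : ∀ φ : BoundedContinuousFunction X ℝ,
      (fun ω => ∫ x, φ x ∂(ν ω : Measure X)) =ᵐ[P] P[(fun ω => φ (f ω)) | E])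
    (hνn : ∀ n, ∀ φ : BoundedContinuousFunction X ℝ,
      (fun ω => ∫ x, φ x ∂(νn n ω : Measure X)) =ᵐ[P] P[(fun ω => φ (f ω)) | En n]) :
    TendstoInMeasure P
      (fun n ω => (LevyProkhorov.toMeasureEquiv (α := ProbabilityMeasure X)).symm (νn n ω)) atTop
      (fun ω => (LevyProkhorov.toMeasureEquiv (α := ProbabilityMeasure X)).symm (ν ω)) := by
  refine tendstoInMeasure_levyProkhorov_of_tendstoInMeasure_integral (fun φ => ?_)
    fun r hr θ hθ => IsCondDistrib.exists_finset_measure_measureReal_compl_iUnion_ball_gt_le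
      hν hE hf hr hθ
  have hφf : MemLp (fun ω => φ (f ω)) 2 P :=
    MemLp.of_bound (φ.continuous.measurable.comp_aemeasurable hf).aestronglyMeasurable ‖φ‖
      (ae_of_all _ fun ω => φ.norm_coe_le_norm (f ω))
  exact (tendstoInMeasure_of_tendsto_eLpNorm two_ne_zero
    (fun n => integrable_condExp.aestronglyMeasurable) integrable_condExp.aestronglyMeasurable
    (hconv _ hφf)).congr (fun n => (hνn n φ).symm) (hν φ).symm

/-- If conditional expectations w.r.t. sub-σ-fields `Eₙ` converge in `L²` to the
conditional expectation w.r.t. `E` (for every `L²` function), then for any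
random variable `f` with values in a Polish metric space `X`, the conditional
distributions `P_{f|Eₙ}` converge to `P_{f|E}` in probability (as random
elements of `Prob(X)`, metrized by the Lévy–Prokhorov distance). -/
theorem condDistrib_continuous_in_sigma_field {Ω X : Type*} {m0 : MeasurableSpace Ω}
    (P : Measure Ω) [IsProbabilityMeasure P]
    [MetricSpace X] [CompleteSpace X] [TopologicalSpace.SeparableSpace X]
    [MeasurableSpace X] [BorelSpace X]
    (E : MeasurableSpace Ω) (En : ℕ → MeasurableSpace Ω)
    (hE : E ≤ m0) (hEn : ∀ n, En n ≤ m0)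
    (hconv : ∀ g : Ω → ℝ, MemLp g 2 P →
      Tendsto (fun n => eLpNorm (P[g | En n] - P[g | E]) 2 P) atTop (nhds 0))
    (f : Ω → X) (hf : AEMeasurable f P)
    (ν : Ω → ProbabilityMeasure X) (νn : ℕ → Ω → ProbabilityMeasure X)
    (hν : ∀ φ : BoundedContinuousFunction X ℝ,
      (fun ω => ∫ x, φ x ∂(ν ω : Measure X)) =ᵐ[P] P[(fun ω => φ (f ω)) | E])
    (hνn : ∀ n, ∀ φ : BoundedContinuousFunction X ℝ,
      (fun ω => ∫ x, φ x ∂(νn n ω : Measure X)) =ᵐ[P] P[(fun ω => φ (f ω)) | En n]) :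
    TendstoInMeasure P
      (fun n ω => (LevyProkhorov.toMeasureEquiv (α := ProbabilityMeasure X)).symm (νn n ω)) atTop
      (fun ω => (LevyProkhorov.toMeasureEquiv (α := ProbabilityMeasure X)).symm (ν ω)) :=
  condDistrib_continuous_in_sigma_field_general P E En hE hconv f hf ν νn hν hνn
end

section
/- Let (Ω, F, P) be a probability space and E_1, E_2, ... independent sub-σ-fields. Then the conditional expectation operators E[·|E_n] converge to the expectation operator f ↦ E[f]·1 in the strong operator topology on L²; i.e., for every f ∈ L²(Ω, F, P), E[f | E_n] → E[f] in L² as n → ∞. -/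
/-!
Put `h = f - E[f]` and `gₙ = E[h | Eₙ] = E[f | Eₙ] - E[f]`. Each `gₙ` is the orthogonal projection
of `h` onto `L²(Eₙ)`, so `⟪h, gₙ⟫ = ‖gₙ‖²`; and for `i ≠ j` the functions `gᵢ`, `gⱼ` are
independent with mean zero, so `⟪gᵢ, gⱼ⟫ = E[gᵢ] E[gⱼ] = 0`. Bessel's inequality then gives
`∑ ‖gₙ‖² ≤ ‖h‖² < ∞`, whence `gₙ → 0` in `L²`.
-/

open MeasureTheory ProbabilityTheory Filter

open scoped RealInnerProductSpace

section Bessel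

variable {H : Type*} [NormedAddCommGroup H] [InnerProductSpace ℝ H]

theorem sum_norm_sq_le_of_pairwise_inner_eq_zero {ι : Type*} {x : H} {y : ι → H}
    (horth : Pairwise fun i j => ⟪y i, y j⟫ = 0) (hproj : ∀ i, ⟪x, y i⟫ = ‖y i‖ ^ 2)
    (s : Finset ι) : ∑ i ∈ s, ‖y i‖ ^ 2 ≤ ‖x‖ ^ 2 := by
  have hinner : ⟪x, ∑ i ∈ s, y i⟫ = ∑ i ∈ s, ‖y i‖ ^ 2 := by
    rw [inner_sum]
    exact Finset.sum_congr rfl fun i _ => hproj i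
  have hpythagoras : ‖∑ i ∈ s, y i‖ ^ 2 = ∑ i ∈ s, ‖y i‖ ^ 2 := by
    rw [← real_inner_self_eq_norm_sq, sum_inner]
    refine Finset.sum_congr rfl fun i hi => ?_
    rw [inner_sum, Finset.sum_eq_single i (fun j _ hji => horth hji.symm) (absurd hi),
      real_inner_self_eq_norm_sq]
  have hnonneg := sq_nonneg ‖x - ∑ i ∈ s, y i‖
  rw [norm_sub_sq_real, hinner, hpythagoras] at hnonneg
  linarith

theorem tendsto_zero_of_pairwise_inner_eq_zero {x : H} {y : ℕ → H}
    (horth : Pairwise fun i j => ⟪y i, y j⟫ = 0) (hproj : ∀ i, ⟪x, y i⟫ = ‖y i‖ ^ 2) :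
    Tendsto y atTop (nhds 0) := by
  have hsummable : Summable fun n => ‖y n‖ ^ 2 :=
    summable_of_sum_le (fun n => sq_nonneg _)
      (sum_norm_sq_le_of_pairwise_inner_eq_zero horth hproj)
  rw [tendsto_zero_iff_norm_tendsto_zero]
  simpa using hsummable.tendsto_atTop_zero.sqrt

end Bessel

section CondExp

variable {Ω : Type*} {m m₁ m₂ m0 : MeasurableSpace Ω} {P : Measure Ω} [IsProbabilityMeasure P]

theorem integral_condExp_mul_condExp_of_indep (h₁ : m₁ ≤ m0) (h₂ : m₂ ≤ m0)
    (hindep : Indep m₁ m₂ P) (f g : Ω → ℝ) :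
    ∫ ω, P[f | m₁] ω * P[g | m₂] ω ∂P = (∫ ω, f ω ∂P) * ∫ ω, g ω ∂P := by
  have hfun : IndepFun (P[f | m₁]) (P[g | m₂]) P := by
    rw [IndepFun_iff_Indep]
    exact indep_of_indep_of_le_right
      (indep_of_indep_of_le_left hindep stronglyMeasurable_condExp.measurable.comap_le)
      stronglyMeasurable_condExp.measurable.comap_le
  rw [← integral_condExp h₁ (f := f), ← integral_condExp h₂ (f := g)]
  exact hfun.integral_mul_eq_mul_integral
    (stronglyMeasurable_condExp.mono h₁).aestronglyMeasurable
    (stronglyMeasurable_condExp.mono h₂).aestronglyMeasurable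

theorem condExp_sub_integral_ae_eq (hm : m ≤ m0) {f : Ω → ℝ} (hf : Integrable f P) :
    P[f - fun _ => ∫ ω, f ω ∂P | m] =ᵐ[P] P[f | m] - fun _ => ∫ ω, f ω ∂P := by
  filter_upwards [condExp_sub hf (integrable_const _) m] with ω hω
  rw [hω, condExp_const hm]

end CondExp

/-- For independent sub-σ-fields `Eₙ`, the conditional expectation operators
converge strongly on `L²` to the (unconditional) expectation operator:
`E[f | Eₙ] → E[f]` in `L²` for every `f ∈ L²`. -/
theorem condexp_indep_tendsto_expectation {Ω : Type*} {m0 : MeasurableSpace Ω}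
    (P : Measure Ω) [IsProbabilityMeasure P]
    (En : ℕ → MeasurableSpace Ω) (hle : ∀ n, En n ≤ m0)
    (hindep : iIndep En P)
    (f : Ω → ℝ) (hf : MemLp f 2 P) :
    Tendsto (fun n => eLpNorm (P[f | En n] - fun _ => ∫ ω, f ω ∂P) 2 P) atTop
      (nhds 0) := by
  set h : Ω → ℝ := f - fun _ => ∫ ω, f ω ∂P
  have hh : MemLp h 2 P := hf.sub (memLp_const _)
  have hh_mean : ∫ ω, h ω ∂P = 0 := by
    simp [h, integral_sub (hf.integrable one_le_two) (integrable_const _)]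
  let Y : ℕ → Lp ℝ 2 P := fun n => condExpL2 ℝ ℝ (hle n) (hh.toLp h)
  have hY : ∀ n, Y n =ᵐ[P] P[h | En n] := fun n => hh.condExpL2_ae_eq_condExp (hle n)
  have horth : Pairwise fun i j => ⟪Y i, Y j⟫ = 0 := fun i j hij =>
    calc ⟪Y i, Y j⟫ = ∫ ω, P[h | En i] ω * P[h | En j] ω ∂P := by
          rw [L2.inner_def]
          refine integral_congr_ae ?_
          filter_upwards [hY i, hY j] with ω hi hj
          simp [hi, hj, mul_comm]
      _ = 0 := by
          rw [integral_condExp_mul_condExp_of_indep (hle i) (hle j) (hindep.indep hij), hh_mean,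
            zero_mul]
  have hproj : ∀ n, ⟪hh.toLp h, Y n⟫ = ‖Y n‖ ^ 2 := fun n => by
    rw [← real_inner_self_eq_norm_sq,
      inner_condExpL2_eq_inner_fun _ _ _ (aestronglyMeasurable_condExpL2 _ _)]
  have hnorm : ∀ n, eLpNorm (P[f | En n] - fun _ => ∫ ω, f ω ∂P) 2 P = ‖Y n‖ₑ := fun n => by
    rw [Lp.enorm_def]
    exact eLpNorm_congr_ae
      ((hY n).trans (condExp_sub_integral_ae_eq (hle n) (hf.integrable one_le_two))).symm
  simp only [hnorm]
  simpa using (tendsto_zero_of_pairwise_inner_eq_zero horth hproj).enorm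
end
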